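/- Coarea inequality for U(1)-signatures: let G be a finite weighted graph with signature s : E^{or} → U(1) and f : V → ℂ with max_u |f(u)| = 1. Then ∫₀¹ [ ι^s(V^f(√t)) + |E(V^f(√t), V^f(√t)^c)| ] dt ≤ (3/2) Σ_{{u,v}∈E} w_{uv} |f(u) - s_{uv} f(v)| (|f(u)| + |f(v)|). -/

import Mathlib

/-!
Write `f u = ‖f u‖ τ u` with `|τ u| = 1` and put `c = ‖f‖²`, so that `V^f(√t) = {c ≥ t}`.
Testing the frustration index of `{c ≥ t}` with `τ` and writing its boundary edge by edge, the
integrand at `t` is at most a sum over ordered pairs of step functions of `t`; integrating over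
`[0, 1]` bounds the left-hand side by
`Σ_{u,v} (½ w |τ u - s τ v| min (c u) (c v) + w (c u - c v)⁺)`, which by symmetry of `w` equals
`½ Σ_{u,v} w (|τ u - s τ v| min (c u) (c v) + |c u - c v|)`. Each term is at most
`(3/2) w |f u - s f v| (|f u| + |f v|)`, because both the angular part
`|τ u - s τ v| min (|f u|, |f v|)` and the radial part `||f u| - |f v||` are at most
`|f u - s f v|`.
-/

open Finset

/-- Rayleigh quotient of `f` for the magnetic Laplacian with weights `w`,
vertex measure `μ` and signature `s` (each unordered edge counted once). -/
noncomputable def rayleigh {V : Type*} [Fintype V] (G : SimpleGraph V) [DecidableRel G.Adj]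
    (w : V → V → ℝ) (μ : V → ℝ) (s : V → V → ℂ) (f : V → ℂ) : ℝ :=
  ((1 / 2) * ∑ u : V, ∑ v : V, if G.Adj u v then w u v * ‖f u - s u v * f v‖ ^ 2 else 0) /
    (∑ u : V, ‖f u‖ ^ 2 * μ u)

/-- The first eigenvalue of the magnetic Laplacian, characterized by the
variational (min-max) principle as the infimum of Rayleigh quotients. -/
noncomputable def lam1 {V : Type*} [Fintype V] (G : SimpleGraph V) [DecidableRel G.Adj]
    (w : V → V → ℝ) (μ : V → ℝ) (s : V → V → ℂ) : ℝ :=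
  sInf { x : ℝ | ∃ f : V → ℂ, f ≠ 0 ∧ x = rayleigh G w μ s f }

/-- Frustration index of `V1` with `U(1)`-valued switching functions. -/
noncomputable def frusIdx {V : Type*} [Fintype V] (G : SimpleGraph V) [DecidableRel G.Adj]
    (w : V → V → ℝ) (s : V → V → ℂ) (V1 : Finset V) : ℝ :=
  sInf { x : ℝ | ∃ τ : V → ℂ, (∀ u, ‖τ u‖ = 1) ∧
    x = (1 / 2) * ∑ u ∈ V1, ∑ v ∈ V1, if G.Adj u v then w u v * ‖τ u - s u v * τ v‖ else 0 }

/-- Weighted boundary measure `|E(V1, V1ᶜ)|`. -/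
noncomputable def bdry {V : Type*} [Fintype V] [DecidableEq V] (G : SimpleGraph V)
    [DecidableRel G.Adj] (w : V → V → ℝ) (V1 : Finset V) : ℝ :=
  ∑ u ∈ V1, ∑ v ∈ V1ᶜ, if G.Adj u v then w u v else 0

/-- `μ`-volume of `V1`. -/
noncomputable def vol {V : Type*} [Fintype V] (μ : V → ℝ) (V1 : Finset V) : ℝ :=
  ∑ u ∈ V1, μ u

/-- The Cheeger constant `h₁ˢ(μ)`. -/
noncomputable def cheeger1 {V : Type*} [Fintype V] [DecidableEq V] (G : SimpleGraph V)
    [DecidableRel G.Adj] (w : V → V → ℝ) (μ : V → ℝ) (s : V → V → ℂ) : ℝ :=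
  sInf { x : ℝ | ∃ V1 : Finset V, V1.Nonempty ∧
    x = (frusIdx G w s V1 + bdry G w V1) / vol μ V1 }

/-- Maximal `μ`-degree `d_μ`. -/
noncomputable def dmu {V : Type*} [Fintype V] (G : SimpleGraph V) [DecidableRel G.Adj]
    (w : V → V → ℝ) (μ : V → ℝ) : ℝ :=
  ⨆ u : V, (∑ v : V, if G.Adj u v then w u v else 0) / μ u

open MeasureTheory

section EdgeInequality

variable {E : Type*} [NormedAddCommGroup E] [InnerProductSpace ℝ E]

lemma min_mul_norm_sub_le_norm_smul_sub_smul {e₁ e₂ : E} (he₁ : ‖e₁‖ = 1) (he₂ : ‖e₂‖ = 1)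
    {r₁ r₂ : ℝ} (hr₁ : 0 ≤ r₁) (hr₂ : 0 ≤ r₂) :
    min r₁ r₂ * ‖e₁ - e₂‖ ≤ ‖r₁ • e₁ - r₂ • e₂‖ := by
  -- for `r₁ ≤ r₂`, `⟪e₁, e₂⟫ ≤ 1` gives `‖r₁ • e₁ - r₂ • e₂‖² - r₁² ‖e₁ - e₂‖² ≥ (r₂ - r₁)²`
  have hinner : inner ℝ e₁ e₂ ≤ 1 := by simpa [he₁, he₂] using real_inner_le_norm e₁ e₂
  have hsq : (min r₁ r₂ * ‖e₁ - e₂‖) ^ 2 ≤ ‖r₁ • e₁ - r₂ • e₂‖ ^ 2 := by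
    simp only [mul_pow, norm_sub_sq_real, norm_smul, real_inner_smul_left, real_inner_smul_right,
      Real.norm_eq_abs, abs_of_nonneg hr₁, abs_of_nonneg hr₂, he₁, he₂]
    rcases le_total r₁ r₂ with h | h
    · rw [min_eq_left h]
      nlinarith [mul_le_mul_of_nonneg_left hinner (mul_nonneg hr₁ (sub_nonneg.2 h))]
    · rw [min_eq_right h]
      nlinarith [mul_le_mul_of_nonneg_left hinner (mul_nonneg hr₂ (sub_nonneg.2 h))]
  exact (pow_le_pow_iff_left₀ (by positivity) (norm_nonneg _) two_ne_zero).mp hsq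

lemma norm_sub_mul_min_sq_add_abs_sq_sub_sq_le {e₁ e₂ : E} (he₁ : ‖e₁‖ = 1) (he₂ : ‖e₂‖ = 1)
    {r₁ r₂ : ℝ} (hr₁ : 0 ≤ r₁) (hr₂ : 0 ≤ r₂) :
    ‖e₁ - e₂‖ * min (r₁ ^ 2) (r₂ ^ 2) + |r₁ ^ 2 - r₂ ^ 2| ≤
      3 / 2 * (‖r₁ • e₁ - r₂ • e₂‖ * (r₁ + r₂)) := by
  set D := ‖r₁ • e₁ - r₂ • e₂‖
  have hangle := min_mul_norm_sub_le_norm_smul_sub_smul he₁ he₂ hr₁ hr₂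
  have hradial : |r₁ - r₂| ≤ D := by
    simpa [norm_smul, he₁, he₂, abs_of_nonneg hr₁, abs_of_nonneg hr₂] using
      abs_norm_sub_norm_le (r₁ • e₁) (r₂ • e₂)
  have hD : 0 ≤ D := norm_nonneg _
  have hT : 0 ≤ ‖e₁ - e₂‖ := norm_nonneg _
  rcases le_total r₁ r₂ with h | h
  · rw [min_eq_left h] at hangle
    rw [min_eq_left (pow_le_pow_left₀ hr₁ h 2), abs_of_nonpos (by nlinarith)]
    rw [abs_of_nonpos (by linarith)] at hradial
    nlinarith [mul_le_mul_of_nonneg_right hangle hr₁, mul_le_mul_of_nonneg_left h hD]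
  · rw [min_eq_right h] at hangle
    rw [min_eq_right (pow_le_pow_left₀ hr₂ h 2), abs_of_nonneg (by nlinarith)]
    rw [abs_of_nonneg (by linarith)] at hradial
    nlinarith [mul_le_mul_of_nonneg_right hangle hr₂, mul_le_mul_of_nonneg_left h hD]

end EdgeInequality

section LevelSets

variable {V : Type*} [Fintype V] (c : V → ℝ) (t : ℝ)

lemma sum_superlevel_sum_superlevel (h : V → V → ℝ) :
    ∑ u ∈ univ.filter (t ≤ c ·), ∑ v ∈ univ.filter (t ≤ c ·), h u v =
      ∑ u, ∑ v, h u v * (Set.Iic (min (c u) (c v))).indicator (1 : ℝ → ℝ) t := by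
  simp only [sum_filter, Set.indicator_apply, Set.mem_Iic, le_min_iff, Pi.one_apply]
  refine sum_congr rfl fun u _ => ?_
  split_ifs with hu <;> simp [hu]

lemma sum_superlevel_sum_compl [DecidableEq V] (h : V → V → ℝ) :
    ∑ u ∈ univ.filter (t ≤ c ·), ∑ v ∈ (univ.filter (t ≤ c ·))ᶜ, h u v =
      ∑ u, ∑ v, h u v * ((Set.Iic (c u)).indicator (1 : ℝ → ℝ) t -
        (Set.Iic (min (c u) (c v))).indicator (1 : ℝ → ℝ) t) := by
  simp only [compl_filter, sum_filter, Set.indicator_apply, Set.mem_Iic, le_min_iff, Pi.one_apply]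
  refine sum_congr rfl fun u _ => ?_
  by_cases hu : t ≤ c u <;> simp only [hu, if_true, if_false, true_and, false_and, sub_self,
    mul_zero, sum_const_zero]
  refine sum_congr rfl fun v _ => ?_
  by_cases hv : t ≤ c v <;> simp [hv]

end LevelSets

section LayerCake

variable {V : Type*} [Fintype V]

local notation "μ₀₁" => volume.restrict (Set.Ioc (0 : ℝ) 1)

lemma integrable_indicator_Iic_one (x : ℝ) : Integrable ((Set.Iic x).indicator (1 : ℝ → ℝ)) μ₀₁ :=
  (integrable_const 1).indicator measurableSet_Iic

lemma integral_indicator_Iic_one {x : ℝ} (hx : x ∈ Set.Icc (0 : ℝ) 1) :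
    ∫ t, (Set.Iic x).indicator (1 : ℝ → ℝ) t ∂μ₀₁ = x := by
  rw [integral_indicator_one measurableSet_Iic, measureReal_restrict_apply measurableSet_Iic,
    Set.Iic_inter_Ioc_of_le hx.2, Real.volume_real_Ioc_of_le hx.1, sub_zero]

lemma integrable_add_mul_sub_indicator (α β x m : ℝ) :
    Integrable (fun t => α * (Set.Iic m).indicator 1 t +
      β * ((Set.Iic x).indicator 1 t - (Set.Iic m).indicator 1 t)) μ₀₁ :=
  ((integrable_indicator_Iic_one m).const_mul α).add
    (((integrable_indicator_Iic_one x).sub (integrable_indicator_Iic_one m)).const_mul β)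

lemma integral_add_mul_sub_indicator (α β : ℝ) {x m : ℝ} (hx : x ∈ Set.Icc (0 : ℝ) 1)
    (hm : m ∈ Set.Icc (0 : ℝ) 1) :
    ∫ t, (α * (Set.Iic m).indicator 1 t +
      β * ((Set.Iic x).indicator 1 t - (Set.Iic m).indicator 1 t)) ∂μ₀₁ = α * m + β * (x - m) := by
  have hx' := integrable_indicator_Iic_one x
  have hm' := integrable_indicator_Iic_one m
  rw [integral_add (hm'.const_mul α) (by exact (hx'.sub hm').const_mul β), integral_const_mul,
    integral_const_mul, integral_sub hx' hm', integral_indicator_Iic_one hx,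
    integral_indicator_Iic_one hm]

lemma integral_sum_sum_add_mul_sub_indicator (a b : V → V → ℝ) {c : V → ℝ}
    (hc : ∀ u, c u ∈ Set.Icc (0 : ℝ) 1) :
    ∫ t, ∑ u, ∑ v, (a u v * (Set.Iic (min (c u) (c v))).indicator 1 t +
      b u v * ((Set.Iic (c u)).indicator 1 t - (Set.Iic (min (c u) (c v))).indicator 1 t)) ∂μ₀₁ =
      ∑ u, ∑ v, (a u v * min (c u) (c v) + b u v * (c u - min (c u) (c v))) := by
  have hmin : ∀ u v, min (c u) (c v) ∈ Set.Icc (0 : ℝ) 1 := fun u v =>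
    ⟨le_min (hc u).1 (hc v).1, (min_le_left _ _).trans (hc u).2⟩
  rw [integral_finsetSum _ fun u _ => integrable_finsetSum _ fun v _ =>
    integrable_add_mul_sub_indicator _ _ _ _]
  refine sum_congr rfl fun u _ => ?_
  rw [integral_finsetSum _ fun v _ => integrable_add_mul_sub_indicator _ _ _ _]
  exact sum_congr rfl fun v _ => integral_add_mul_sub_indicator _ _ (hc u) (hmin u v)

end LayerCake

lemma Complex.norm_exp_arg_sub_mul_min_sq_add_abs_sq_sub_sq_le {σ : ℂ} (hσ : ‖σ‖ = 1) (a b : ℂ) :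
    ‖exp (arg a * I) - σ * exp (arg b * I)‖ * min (‖a‖ ^ 2) (‖b‖ ^ 2) + |‖a‖ ^ 2 - ‖b‖ ^ 2| ≤
      3 / 2 * (‖a - σ * b‖ * (‖a‖ + ‖b‖)) := by
  have h := norm_sub_mul_min_sq_add_abs_sq_sub_sq_le (norm_exp_ofReal_mul_I (arg a))
    (e₂ := σ * exp (arg b * I)) (by rw [norm_mul, hσ, norm_exp_ofReal_mul_I, one_mul])
    (norm_nonneg a) (norm_nonneg b)
  rwa [real_smul, real_smul, norm_mul_exp_arg_mul_I, mul_left_comm (‖b‖ : ℂ),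
    norm_mul_exp_arg_mul_I] at h

lemma sum_sum_mul_sub_min_eq_half_sum_sum_mul_abs {ι : Type*} [Fintype ι] {W : ι → ι → ℝ}
    (hW : ∀ i j, W i j = W j i) (x : ι → ℝ) :
    ∑ i, ∑ j, W i j * (x i - min (x i) (x j)) = 1 / 2 * ∑ i, ∑ j, W i j * |x i - x j| := by
  have hswap : ∑ i, ∑ j, W i j * (x i - min (x i) (x j)) =
      ∑ i, ∑ j, W i j * (x j - min (x i) (x j)) := by
    rw [sum_comm]
    simp only [hW _ _, min_comm]
  have hpair : ∀ i j, (x i - min (x i) (x j)) + (x j - min (x i) (x j)) = |x i - x j| := by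
    intro i j
    rcases le_total (x i) (x j) with h | h
    · rw [min_eq_left h, abs_of_nonpos (sub_nonpos.2 h)]; ring
    · rw [min_eq_right h, abs_of_nonneg (sub_nonneg.2 h)]; ring
  have htwice : 2 * ∑ i, ∑ j, W i j * (x i - min (x i) (x j)) =
      ∑ i, ∑ j, W i j * |x i - x j| := by
    rw [two_mul]
    nth_rewrite 2 [hswap]
    simp only [← sum_add_distrib, ← mul_add, hpair]
  linarith

section Graph

variable {V : Type*} (G : SimpleGraph V) [DecidableRel G.Adj] {w : V → V → ℝ}
  (s : V → V → ℂ)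

lemma frusIdx_sum_nonneg (hw_pos : ∀ u v, G.Adj u v → 0 < w u v) (V1 : Finset V) (τ : V → ℂ) :
    0 ≤ 1 / 2 * ∑ u ∈ V1, ∑ v ∈ V1, if G.Adj u v then w u v * ‖τ u - s u v * τ v‖ else 0 := by
  refine mul_nonneg (by norm_num) (sum_nonneg fun u _ => sum_nonneg fun v _ => ?_)
  split_ifs with h
  exacts [mul_nonneg (hw_pos u v h).le (norm_nonneg _), le_rfl]

lemma frusIdx_nonneg [Fintype V] (hw_pos : ∀ u v, G.Adj u v → 0 < w u v) (V1 : Finset V) :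
    0 ≤ frusIdx G w s V1 :=
  Real.sInf_nonneg <| by
    rintro _ ⟨τ, -, rfl⟩
    exact frusIdx_sum_nonneg G s hw_pos V1 τ

lemma frusIdx_le [Fintype V] (hw_pos : ∀ u v, G.Adj u v → 0 < w u v) {τ : V → ℂ}
    (hτ : ∀ u, ‖τ u‖ = 1) (V1 : Finset V) :
    frusIdx G w s V1 ≤
      1 / 2 * ∑ u ∈ V1, ∑ v ∈ V1, if G.Adj u v then w u v * ‖τ u - s u v * τ v‖ else 0 :=
  csInf_le ⟨0, by rintro _ ⟨τ', -, rfl⟩; exact frusIdx_sum_nonneg G s hw_pos V1 τ'⟩ ⟨τ, hτ, rfl⟩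

lemma bdry_nonneg [Fintype V] [DecidableEq V] (hw_pos : ∀ u v, G.Adj u v → 0 < w u v)
    (V1 : Finset V) : 0 ≤ bdry G w V1 :=
  sum_nonneg fun u _ => sum_nonneg fun v _ => by
    split_ifs with h
    exacts [(hw_pos u v h).le, le_rfl]

lemma frusIdx_add_bdry_superlevel_le [Fintype V] [DecidableEq V]
    (hw_pos : ∀ u v, G.Adj u v → 0 < w u v) {τ : V → ℂ} (hτ : ∀ u, ‖τ u‖ = 1) (c : V → ℝ) (t : ℝ) :
    frusIdx G w s (univ.filter (t ≤ c ·)) + bdry G w (univ.filter (t ≤ c ·)) ≤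
      ∑ u, ∑ v, (1 / 2 * (if G.Adj u v then w u v * ‖τ u - s u v * τ v‖ else 0) *
          (Set.Iic (min (c u) (c v))).indicator 1 t +
        (if G.Adj u v then w u v else 0) *
          ((Set.Iic (c u)).indicator 1 t - (Set.Iic (min (c u) (c v))).indicator 1 t)) := by
  have h := frusIdx_le G s hw_pos hτ (univ.filter (t ≤ c ·))
  rw [sum_superlevel_sum_superlevel] at h
  rw [bdry, sum_superlevel_sum_compl]
  simp only [mul_sum, sum_add_distrib, mul_assoc] at h ⊢
  linarith

lemma pair_contribution_le (hw_pos : ∀ u v, G.Adj u v → 0 < w u v)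
    (hs_unit : ∀ u v, G.Adj u v → ‖s u v‖ = 1) (f : V → ℂ) (u v : V) :
    1 / 2 * (if G.Adj u v then
          w u v * ‖Complex.exp (Complex.arg (f u) * Complex.I) -
            s u v * Complex.exp (Complex.arg (f v) * Complex.I)‖ else 0) *
        min (‖f u‖ ^ 2) (‖f v‖ ^ 2) +
      1 / 2 * ((if G.Adj u v then w u v else 0) * |‖f u‖ ^ 2 - ‖f v‖ ^ 2|) ≤
    3 / 4 * (if G.Adj u v then w u v * ‖f u - s u v * f v‖ * (‖f u‖ + ‖f v‖) else 0) := by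
  by_cases h : G.Adj u v
  · have := mul_le_mul_of_nonneg_left
      (Complex.norm_exp_arg_sub_mul_min_sq_add_abs_sq_sub_sq_le (hs_unit u v h) (f u) (f v))
      (hw_pos u v h).le
    simp only [if_pos h]
    linarith
  · simp [h]

end Graph

open scoped Classical

theorem stmt_12_general {V : Type*} [Fintype V] [DecidableEq V] (G : SimpleGraph V) [DecidableRel G.Adj]
    (w : V → V → ℝ) (s : V → V → ℂ)
    (hw_sym : ∀ u v, w u v = w v u)
    (hw_pos : ∀ u v, G.Adj u v → 0 < w u v)
    (hs_unit : ∀ u v, G.Adj u v → ‖s u v‖ = 1)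
    (f : V → ℂ) (hle : ∀ u, ‖f u‖ ≤ 1) :
    (∫ t in (0:ℝ)..1,
        (frusIdx G w s (Finset.univ.filter fun u => Real.sqrt t ≤ ‖f u‖) +
          bdry G w (Finset.univ.filter fun u => Real.sqrt t ≤ ‖f u‖))) ≤
      (3 / 2) * ((1 / 2) * ∑ u : V, ∑ v : V,
        if G.Adj u v then w u v * ‖f u - s u v * f v‖ * (‖f u‖ + ‖f v‖) else 0) := by
  set c : V → ℝ := fun u => ‖f u‖ ^ 2
  have hc : ∀ u, c u ∈ Set.Icc (0 : ℝ) 1 := fun u =>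
    ⟨sq_nonneg _, pow_le_one₀ (norm_nonneg _) (hle u)⟩
  set τ : V → ℂ := fun u => Complex.exp (Complex.arg (f u) * Complex.I)
  have hτ : ∀ u, ‖τ u‖ = 1 := fun u => Complex.norm_exp_ofReal_mul_I _
  set A : V → V → ℝ := fun u v => if G.Adj u v then w u v * ‖τ u - s u v * τ v‖ else 0
  set W : V → V → ℝ := fun u v => if G.Adj u v then w u v else 0
  have hlevel : ∀ t : ℝ,
      (univ.filter fun u => Real.sqrt t ≤ ‖f u‖) = univ.filter (t ≤ c ·) := fun t => by
    ext u
    simp [Real.sqrt_le_iff, c]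
  rw [intervalIntegral.integral_of_le zero_le_one]
  calc _ ≤ ∫ t in Set.Ioc 0 1, ∑ u, ∑ v,
          (1 / 2 * A u v * (Set.Iic (min (c u) (c v))).indicator 1 t +
            W u v * ((Set.Iic (c u)).indicator 1 t - (Set.Iic (min (c u) (c v))).indicator 1 t)) :=
        -- nonnegativity of the integrand stands in for its integrability
        integral_mono_of_nonneg
          (ae_of_all _ fun t => add_nonneg (frusIdx_nonneg G s hw_pos _) (bdry_nonneg G hw_pos _))
          (integrable_finsetSum _ fun u _ => integrable_finsetSum _ fun v _ =>
            integrable_add_mul_sub_indicator _ _ _ _)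
          (ae_of_all _ fun t => by
            simpa only [hlevel] using frusIdx_add_bdry_superlevel_le G s hw_pos hτ c t)
    _ = ∑ u, ∑ v, (1 / 2 * A u v * min (c u) (c v) + W u v * (c u - min (c u) (c v))) :=
        integral_sum_sum_add_mul_sub_indicator _ _ hc
    _ = ∑ u, ∑ v, (1 / 2 * A u v * min (c u) (c v) + 1 / 2 * (W u v * |c u - c v|)) := by
        have hW : ∀ u v, W u v = W v u := fun u v => by
          simp only [W, G.adj_comm u v, hw_sym u v]
        simp only [sum_add_distrib, sum_sum_mul_sub_min_eq_half_sum_sum_mul_abs hW, mul_sum]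
    _ ≤ ∑ u, ∑ v, 3 / 4 *
          (if G.Adj u v then w u v * ‖f u - s u v * f v‖ * (‖f u‖ + ‖f v‖) else 0) :=
        sum_le_sum fun u _ => sum_le_sum fun v _ => pair_contribution_le G s hw_pos hs_unit f u v
    _ = _ := by simp only [← mul_sum]; ring

theorem stmt_12 {V : Type*} [Fintype V] [DecidableEq V] (G : SimpleGraph V) [DecidableRel G.Adj]
    (w : V → V → ℝ) (s : V → V → ℂ)
    (hw_sym : ∀ u v, w u v = w v u)
    (hw_pos : ∀ u v, G.Adj u v → 0 < w u v)
    (hs_unit : ∀ u v, G.Adj u v → ‖s u v‖ = 1)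
    (hs_inv : ∀ u v, G.Adj u v → s v u = (s u v)⁻¹)
    (f : V → ℂ) (hle : ∀ u, ‖f u‖ ≤ 1) (hmax : ∃ u, ‖f u‖ = 1) :
    (∫ t in (0:ℝ)..1,
        (frusIdx G w s (Finset.univ.filter fun u => Real.sqrt t ≤ ‖f u‖) +
          bdry G w (Finset.univ.filter fun u => Real.sqrt t ≤ ‖f u‖))) ≤
      (3 / 2) * ((1 / 2) * ∑ u : V, ∑ v : V,
        if G.Adj u v then w u v * ‖f u - s u v * f v‖ * (‖f u‖ + ‖f v‖) else 0) :=
  stmt_12_general G w s hw_sym hw_pos hs_unit f hle
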